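/- Fraïssé-Hintikka existence and uniqueness of game sentences: for every finite signature Δ, every pointed Kripke model (M,w) over Δ, and every gameboard tree tr with root labeled Δ, there exists a unique game sentence φ in the set Θ_tr of game sentences over tr such that (M,w) ⊨ φ. -/

import Mathlib

/-- Actions over a set `R` of binary relation symbols. -/
inductive Act (R : Type) : Type
  | rel : R → Act R
  | union : Act R → Act R → Act R
  | comp : Act R → Act R → Act R
  | star : Act R → Act R

/-- A Kripke structure over relation symbols `R` and propositional symbols `P`,
with set of worlds `W` (interpretations of nominals are given separately). -/
structure Kripke (R P W : Type) where
  rel : R → W → W → Prop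
  val : W → P → Prop

/-- Interpretation of actions as accessibility relations. -/
def actRel {R P W : Type} (M : Kripke R P W) : Act R → W → W → Prop
  | .rel r => M.rel r
  | .union a b => fun w v => actRel M a w v ∨ actRel M b w v
  | .comp a b => fun w v => ∃ u, actRel M a w u ∧ actRel M b u v
  | .star a => Relation.ReflTransGen (actRel M a)

/-- Sentences of hybrid-dynamic propositional logic, indexed by the type `N` of
nominals (including variables); binders extend the nominal type by `Option`. -/
inductive Sen (R P : Type) : Type → Type 1
  | prop {N : Type} : P → Sen R P N
  | nom {N : Type} : N → Sen R P N
  | conj {N : Type} (n : ℕ) : (Fin n → Sen R P N) → Sen R P N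
  | neg {N : Type} : Sen R P N → Sen R P N
  | pos {N : Type} : Act R → Sen R P N → Sen R P N
  | at_ {N : Type} : N → Sen R P N → Sen R P N
  | store {N : Type} : Sen R P (Option N) → Sen R P N
  | ex {N : Type} : Sen R P (Option N) → Sen R P N

/-- Extend a nominal interpretation by interpreting the fresh variable as `w`. -/
def extOpt {N W : Type} (g : N → W) (w : W) : Option N → W :=
  fun o => o.elim w g

/-- Local satisfaction. -/
def sat {R P W : Type} (M : Kripke R P W) : {N : Type} → (N → W) → W → Sen R P N → Prop
  | _, g, w, .prop p => M.val w p
  | _, g, w, .nom k => w = g k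
  | _, g, w, .conj _ f => ∀ i, sat M g w (f i)
  | _, g, w, .neg φ => ¬ sat M g w φ
  | _, g, w, .pos a φ => ∃ v, actRel M a w v ∧ sat M g v φ
  | _, g, w, .at_ k φ => sat M g (g k) φ
  | _, g, w, .store φ => sat M (extOpt g w) w φ
  | _, g, w, .ex φ => ∃ u, sat M (extOpt g u) w φ
/-- The set of admitted sentence constructors `O ⊆ {◇, @, ↓, ∃}`. -/
structure Ops where
  dia : Bool
  at_ : Bool
  store : Bool
  ex : Bool

mutual
/-- Gameboard trees: nodes labeled by signatures (here: the nominal type `N`),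
edges labeled by sentence operators admitted by `O`. -/
inductive GTree (R P : Type) (O : Ops) : Type → Type 1
  | leaf {N : Type} : GTree R P O N
  | node {N : Type} : GForest R P O N → GTree R P O N

/-- A list of labeled edges leaving a node of a gameboard tree. -/
inductive GForest (R P : Type) (O : Ops) : Type → Type 1
  | nil {N : Type} : GForest R P O N
  | cons {N : Type} : GEdge R P O N → GForest R P O N → GForest R P O N

/-- A labeled edge of a gameboard tree together with its target subtree;
`↓`- and `∃`-edges extend the signature by a fresh variable. -/
inductive GEdge (R P : Type) (O : Ops) : Type → Type 1
  | pos {N : Type} : O.dia = true → Act R → GTree R P O N → GEdge R P O N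
  | at_ {N : Type} : O.at_ = true → N → GTree R P O N → GEdge R P O N
  | store {N : Type} : O.store = true → GTree R P O (Option N) → GEdge R P O N
  | ex {N : Type} : O.ex = true → GTree R P O (Option N) → GEdge R P O N
  | idle {N : Type} : GTree R P O N → GEdge R P O N
end

/-- Canonical finite conjunction of a list of sentences. -/
def conjList {R P N : Type} (l : List (Sen R P N)) : Sen R P N :=
  Sen.conj l.length fun i => l.get i

/-- Canonical finite disjunction of a list of sentences. -/
def disjList {R P N : Type} (l : List (Sen R P N)) : Sen R P N :=
  Sen.neg (conjList (l.map Sen.neg))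

/-- Necessity `[a]φ := ¬⟨a⟩¬φ`. -/
def necSen {R P N : Type} (a : Act R) (φ : Sen R P N) : Sen R P N :=
  Sen.neg (Sen.pos a (Sen.neg φ))

/-- Universal quantification `∀x.φ := ¬∃x.¬φ`. -/
def allSen {R P N : Type} (φ : Sen R P (Option N)) : Sen R P N :=
  Sen.neg (Sen.ex (Sen.neg φ))

/-- All sign assignments to the elements of a list. -/
def signings {α : Type} : List α → List (List (α × Bool))
  | [] => [[]]
  | a :: l => (signings l).flatMap fun s => [(a, true) :: s, (a, false) :: s]

/-- A basic sentence: a nominal or a propositional symbol. -/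
def basicSen {R P N : Type} : N ⊕ P → Sen R P N :=
  Sum.elim Sen.nom Sen.prop

/-- Game sentences at a leaf: all complete conjunctions of literals over the
basic sentences, given enumerations `eN`, `eP` of the (finite) signature. -/
def leafTheta {R P N : Type} (eP : List P) (eN : List N) : List (Sen R P N) :=
  (signings (eN.map Sum.inl ++ eP.map Sum.inr)).map fun s =>
    conjList (s.map fun bs =>
      if bs.2 then basicSen bs.1 else Sen.neg (basicSen bs.1))

mutual
/-- The canonical list of game sentences `Θ_tr` over a gameboard tree. -/
def thetaT {R P : Type} {O : Ops} (eP : List P) :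
    {N : Type} → List N → GTree R P O N → List (Sen R P N)
  | _, eN, .leaf => leafTheta eP eN
  | _, eN, .node F => (thetaF eP eN F).map conjList

/-- Lists of choices of game sentences, one per edge of a forest. -/
def thetaF {R P : Type} {O : Ops} (eP : List P) :
    {N : Type} → List N → GForest R P O N → List (List (Sen R P N))
  | _, _, .nil => [[]]
  | _, eN, .cons e F =>
      (thetaE eP eN e).flatMap fun φ => (thetaF eP eN F).map fun l => φ :: l

/-- The possible game sentences contributed by a single labeled edge. -/
def thetaE {R P : Type} {O : Ops} (eP : List P) :
    {N : Type} → List N → GEdge R P O N → List (Sen R P N)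
  | _, eN, .pos _ a t =>
      (thetaT eP eN t).sublists.map fun Γ =>
        conjList [conjList (Γ.map (Sen.pos a)), necSen a (disjList Γ)]
  | _, eN, .at_ _ k t => (thetaT eP eN t).map (Sen.at_ k)
  | _, eN, .store _ t => (thetaT eP (none :: eN.map some) t).map Sen.store
  | _, eN, .ex _ t =>
      (thetaT eP (none :: eN.map some) t).sublists.map fun Γ =>
        conjList [conjList (Γ.map Sen.ex), allSen (disjList Γ)]
  | _, eN, .idle t => thetaT eP eN t
end


/-! ### Auxiliary lemmas -/

section SatLemmas
variable {R P N W : Type} (M : Kripke R P W) (g : N → W) (w : W)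

theorem sat_neg (φ : Sen R P N) : sat M g w (Sen.neg φ) ↔ ¬ sat M g w φ := Iff.rfl

theorem sat_pos' (a : Act R) (φ : Sen R P N) :
    sat M g w (Sen.pos a φ) ↔ ∃ v, actRel M a w v ∧ sat M g v φ := Iff.rfl

theorem sat_ex' (φ : Sen R P (Option N)) :
    sat M g w (Sen.ex φ) ↔ ∃ u, sat M (extOpt g u) w φ := Iff.rfl

theorem sat_conjList (l : List (Sen R P N)) :
    sat M g w (conjList l) ↔ ∀ φ ∈ l, sat M g w φ := by
  simp only [conjList, sat]
  constructor
  · intro h φ hφ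
    obtain ⟨i, rfl⟩ := List.mem_iff_get.mp hφ
    exact h i
  · intro h i
    exact h _ (List.get_mem l i)

theorem sat_disjList (l : List (Sen R P N)) :
    sat M g w (disjList l) ↔ ∃ φ ∈ l, sat M g w φ := by
  rw [disjList, sat_neg, sat_conjList]
  constructor
  · intro h
    by_contra hc
    push_neg at hc
    refine h fun ψ hψ => ?_
    obtain ⟨φ, hφ, rfl⟩ := List.mem_map.mp hψ
    exact (sat_neg M g w φ).mpr (hc φ hφ)
  · rintro ⟨φ, hφ, hs⟩ hall
    exact (sat_neg M g w φ).mp (hall _ (List.mem_map_of_mem hφ)) hs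

theorem sat_nec (a : Act R) (φ : Sen R P N) :
    sat M g w (necSen a φ) ↔ ∀ v, actRel M a w v → sat M g v φ := by
  rw [necSen, sat_neg, sat_pos']
  constructor
  · intro h v hv
    by_contra hc
    exact h ⟨v, hv, (sat_neg M g v φ).mpr hc⟩
  · rintro h ⟨v, hv, hnc⟩
    exact (sat_neg M g v φ).mp hnc (h v hv)

theorem sat_all (φ : Sen R P (Option N)) :
    sat M g w (allSen φ) ↔ ∀ u, sat M (extOpt g u) w φ := by
  rw [allSen, sat_neg, sat_ex']
  constructor
  · intro h u
    by_contra hc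
    exact h ⟨u, (sat_neg M _ w φ).mpr hc⟩
  · rintro h ⟨u, hnc⟩
    exact (sat_neg M _ w φ).mp hnc (h u)

end SatLemmas

theorem conjList_inj {R P N : Type} {l1 l2 : List (Sen R P N)}
    (h : conjList l1 = conjList l2) : l1 = l2 := by
  simp only [conjList] at h
  injection h with hN h1 h2
  refine List.ext_get h1 ?_
  intro i hi1 hi2
  exact (Fin.heq_fun_iff h1).mp h2 ⟨i, hi1⟩

theorem pos_inj {R P N : Type} (a : Act R) :
    Function.Injective (Sen.pos (R := R) (P := P) (N := N) a) := by
  intro x y h; injection h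

theorem ex_inj {R P N : Type} :
    Function.Injective (Sen.ex (R := R) (P := P) (N := N)) := by
  intro x y h; injection h

theorem at_inj {R P N : Type} (k : N) :
    Function.Injective (Sen.at_ (R := R) (P := P) k) := by
  intro x y h; injection h

theorem store_inj {R P N : Type} :
    Function.Injective (Sen.store (R := R) (P := P) (N := N)) := by
  intro x y h; injection h

theorem basicSen_inj {R P N : Type} :
    Function.Injective (basicSen : N ⊕ P → Sen R P N) := by
  rintro (k | p) (k' | p') h <;>
    simp only [basicSen, Sum.elim_inl, Sum.elim_inr] at h
  · injection h with _ h; rw [h]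
  · injection h
  · injection h
  · injection h with _ h; rw [h]

/-- The literal associated to a signed basic symbol. -/
abbrev lit {R P N : Type} (bs : (N ⊕ P) × Bool) : Sen R P N :=
  if bs.2 then basicSen bs.1 else Sen.neg (basicSen bs.1)

theorem lit_inj {R P N : Type} :
    Function.Injective (lit (R := R) (P := P) (N := N)) := by
  rintro ⟨a, b⟩ ⟨a', b'⟩ h
  cases b <;> cases b' <;>
    simp only [lit, if_true, if_false, Bool.false_eq_true, ite_true, ite_false] at h
  · injection h with _ h; rw [basicSen_inj h]
  · exfalso; rcases a with k | p <;> rcases a' with k' | p' <;>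
      simp only [basicSen, Sum.elim_inl, Sum.elim_inr] at h <;> injection h
  · exfalso; rcases a with k | p <;> rcases a' with k' | p' <;>
      simp only [basicSen, Sum.elim_inl, Sum.elim_inr] at h <;> injection h
  · rw [basicSen_inj h]

/-- Sublists of a duplicate-free list are determined by their members. -/
theorem sublist_eq_of_mem_iff {α : Type*} :
    ∀ {L l1 l2 : List α}, l1.Sublist L → l2.Sublist L → L.Nodup →
      (∀ a, a ∈ l1 ↔ a ∈ l2) → l1 = l2
  | [], l1, l2, h1, h2, _, _ => by
      rw [List.sublist_nil.mp h1, List.sublist_nil.mp h2]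
  | b :: L, _, _, h1, h2, hN, h => by
      have hbL : b ∉ L := (List.nodup_cons.mp hN).1
      have hNL : L.Nodup := (List.nodup_cons.mp hN).2
      cases h1 with
      | cons _ h1' =>
        cases h2 with
        | cons _ h2' => exact sublist_eq_of_mem_iff h1' h2' hNL h
        | cons_cons _ h2' =>
          exact absurd (h1'.subset ((h b).mpr (List.mem_cons_self))) hbL
      | cons_cons _ h1' =>
        cases h2 with
        | cons _ h2' =>
          exact absurd (h2'.subset ((h b).mp (List.mem_cons_self))) hbL
        | cons_cons _ h2' =>
          have h' : ∀ a, a ∈ _ ↔ a ∈ _ := fun a =>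
            ⟨fun ha => by
              rcases List.mem_cons.mp ((h a).mp (List.mem_cons_of_mem _ ha)) with rfl | h2
              · exact absurd (h1'.subset ha) hbL
              · exact h2,
             fun ha => by
              rcases List.mem_cons.mp ((h a).mpr (List.mem_cons_of_mem _ ha)) with rfl | h2
              · exact absurd (h2'.subset ha) hbL
              · exact h2⟩
          rw [sublist_eq_of_mem_iff h1' h2' hNL h']

/-! ### Signings -/

theorem mem_signings_map {α : Type} (tv : α → Bool) :
    ∀ l : List α, (l.map fun a => (a, tv a)) ∈ signings l
  | [] => by simp [signings]
  | a :: l => by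
      rw [signings]
      refine List.mem_flatMap.mpr ⟨l.map fun a => (a, tv a), mem_signings_map tv l, ?_⟩
      cases h : tv a <;> simp [h]

theorem mem_signings_cons {α : Type} {a : α} {l : List α} {s : List (α × Bool)}
    (h : s ∈ signings (a :: l)) : ∃ b s', s' ∈ signings l ∧ s = (a, b) :: s' := by
  rw [signings] at h
  obtain ⟨s', hs', hmem⟩ := List.mem_flatMap.mp h
  rcases List.mem_pair.mp hmem with rfl | rfl
  · exact ⟨true, s', hs', rfl⟩
  · exact ⟨false, s', hs', rfl⟩

theorem signings_nodup {α : Type} : ∀ l : List α, (signings l).Nodup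
  | [] => by simp [signings]
  | a :: l => by
      rw [signings, List.nodup_flatMap]
      refine ⟨fun s _ => by simp, ?_⟩
      refine (signings_nodup l).imp ?_
      intro s s' hne x hx hx'
      have hs : x.tail = s := by rcases List.mem_pair.mp hx with rfl | rfl <;> rfl
      have hs' : x.tail = s' := by rcases List.mem_pair.mp hx' with rfl | rfl <;> rfl
      exact hne (hs ▸ hs')

theorem signings_sat_unique {R P N W : Type} (M : Kripke R P W) (g : N → W) (w : W) :
    ∀ (l : List (N ⊕ P)) (s1 s2 : List ((N ⊕ P) × Bool)),
      s1 ∈ signings l → s2 ∈ signings l →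
      (∀ ψ ∈ s1.map (lit (R := R)), sat M g w ψ) →
      (∀ ψ ∈ s2.map (lit (R := R)), sat M g w ψ) → s1 = s2
  | [], s1, s2, h1, h2, _, _ => by
      simp [signings] at h1 h2; rw [h1, h2]
  | a :: l, s1, s2, h1, h2, hs1, hs2 => by
      obtain ⟨b1, s1', hm1, rfl⟩ := mem_signings_cons h1
      obtain ⟨b2, s2', hm2, rfl⟩ := mem_signings_cons h2
      have hh1 : sat M g w (lit (R := R) (a, b1)) := hs1 _ (by simp)
      have hh2 : sat M g w (lit (R := R) (a, b2)) := hs2 _ (by simp)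
      have hb : b1 = b2 := by
        cases b1 <;> cases b2
        · rfl
        · exact absurd hh2 hh1
        · exact absurd hh1 hh2
        · rfl
      subst hb
      rw [signings_sat_unique M g w l s1' s2' hm1 hm2
        (fun ψ h => hs1 ψ (by rw [List.map_cons]; exact List.mem_cons_of_mem _ h))
        (fun ψ h => hs2 ψ (by rw [List.map_cons]; exact List.mem_cons_of_mem _ h))]

/-! ### Leaf case -/

theorem leafTheta_nodup {R P N : Type} (eP : List P) (eN : List N) :
    (leafTheta (R := R) eP eN).Nodup := by
  rw [leafTheta]
  refine List.Nodup.map ?_ (signings_nodup _)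
  intro s1 s2 h
  exact List.map_injective_iff.mpr lit_inj (conjList_inj h)

theorem leaf_exists_unique {R P N W : Type} (M : Kripke R P W) (eP : List P) (eN : List N)
    (g : N → W) (w : W) :
    ∃! φ : Sen R P N, φ ∈ leafTheta eP eN ∧ sat M g w φ := by
  classical
  set base : List (N ⊕ P) := eN.map Sum.inl ++ eP.map Sum.inr with hbase
  set tv : (N ⊕ P) → Bool := fun a => decide (sat M g w (basicSen a)) with htv
  have htvt : ∀ a, tv a = true ↔ sat M g w (basicSen a) := fun a => by
    rw [htv]; exact ⟨of_decide_eq_true, decide_eq_true⟩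
  refine ⟨conjList ((base.map fun a => (a, tv a)).map lit), ⟨?_, ?_⟩, ?_⟩
  · rw [leafTheta]
    exact List.mem_map_of_mem (mem_signings_map tv base)
  · rw [sat_conjList]
    intro ψ hψ
    obtain ⟨bs, hbs, rfl⟩ := List.mem_map.mp hψ
    obtain ⟨aa, ha, rfl⟩ := List.mem_map.mp hbs
    by_cases hs : sat M g w (basicSen aa)
    · have ht : tv aa = true := (htvt aa).mpr hs
      rw [ht]
      simpa [lit] using hs
    · have ht : tv aa = false := by
        cases h : tv aa
        · rfl
        · exact absurd ((htvt aa).mp h) hs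
      rw [ht]
      simpa [lit, sat_neg] using hs
  · rintro φ' ⟨hmem, hsat⟩
    rw [leafTheta] at hmem
    obtain ⟨s, hsig, rfl⟩ := List.mem_map.mp hmem
    have hu := signings_sat_unique M g w base s (base.map fun a => (a, tv a)) hsig
      (mem_signings_map tv base) ?_ ?_
    · rw [hu]
    · intro ψ hψ
      exact (sat_conjList M g w _).mp hsat ψ hψ
    · intro ψ hψ
      obtain ⟨bs, hbs, rfl⟩ := List.mem_map.mp hψ
      obtain ⟨aa, ha, rfl⟩ := List.mem_map.mp hbs
      by_cases hs : sat M g w (basicSen aa)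
      · have ht : tv aa = true := (htvt aa).mpr hs
        rw [ht]; simpa [lit] using hs
      · have ht : tv aa = false := by
          cases h : tv aa
          · rfl
          · exact absurd ((htvt aa).mp h) hs
        rw [ht]; simpa [lit, sat_neg] using hs

/-! ### Canonical filter -/

theorem filter_canon {α : Type*} {ι : Sort*} (L : List α) (hN : L.Nodup) (s : ι → α → Prop)
    (huniq : ∀ i, ∃! γ, γ ∈ L ∧ s i γ) :
    ∃ Γ : List α, Γ.Sublist L ∧ (∀ γ ∈ Γ, ∃ i, s i γ) ∧ (∀ i, ∃ γ ∈ Γ, s i γ) ∧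
      ∀ Γ', Γ'.Sublist L → (∀ γ ∈ Γ', ∃ i, s i γ) → (∀ i, ∃ γ ∈ Γ', s i γ) → Γ' = Γ := by
  classical
  refine ⟨L.filter fun γ => decide (∃ i, s i γ), List.filter_sublist, ?_, ?_, ?_⟩
  · intro γ hγ
    exact of_decide_eq_true (List.mem_filter.mp hγ).2
  · intro i
    obtain ⟨γ, ⟨hγL, hγs⟩, -⟩ := huniq i
    exact ⟨γ, List.mem_filter.mpr ⟨hγL, decide_eq_true ⟨i, hγs⟩⟩, hγs⟩
  · intro Γ' hsub hall hex
    refine sublist_eq_of_mem_iff hsub (List.filter_sublist) hN ?_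
    intro γ
    rw [List.mem_filter]
    constructor
    · intro hγ
      exact ⟨hsub.subset hγ, decide_eq_true (hall γ hγ)⟩
    · rintro ⟨hγL, hd⟩
      obtain ⟨i, hi⟩ := of_decide_eq_true hd
      obtain ⟨γ₀, h₀, hu⟩ := huniq i
      obtain ⟨γ', hγ', hs'⟩ := hex i
      have e1 : γ' = γ₀ := hu _ ⟨hsub.subset hγ', hs'⟩
      have e2 : γ = γ₀ := hu _ ⟨hγL, hi⟩
      rw [e2, ← e1]
      exact hγ'

/-! ### Game sentence satisfaction -/

theorem sat_posGame {R P N W : Type} (M : Kripke R P W) (g : N → W) (w : W) (a : Act R)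
    (Γ : List (Sen R P N)) :
    sat M g w (conjList [conjList (Γ.map (Sen.pos a)), necSen a (disjList Γ)]) ↔
      ((∀ γ ∈ Γ, ∃ v, actRel M a w v ∧ sat M g v γ) ∧
       (∀ v, actRel M a w v → ∃ γ ∈ Γ, sat M g v γ)) := by
  rw [sat_conjList]
  constructor
  · intro h
    have h1 := h _ (List.mem_cons_self)
    have h2 := h _ (List.mem_cons_of_mem _ (List.mem_cons_self))
    rw [sat_conjList] at h1
    rw [sat_nec] at h2
    constructor
    · intro γ hγ
      exact (sat_pos' M g w a γ).mp (h1 _ (List.mem_map_of_mem hγ))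
    · intro v hv
      exact (sat_disjList M g v Γ).mp (h2 v hv)
  · rintro ⟨h1, h2⟩ ψ hψ
    rcases List.mem_pair.mp hψ with rfl | rfl
    · rw [sat_conjList]
      intro ψ hψ
      obtain ⟨γ, hγ, rfl⟩ := List.mem_map.mp hψ
      exact (sat_pos' M g w a γ).mpr (h1 γ hγ)
    · rw [sat_nec]
      intro v hv
      exact (sat_disjList M g v Γ).mpr (h2 v hv)

theorem sat_exGame {R P N W : Type} (M : Kripke R P W) (g : N → W) (w : W)
    (Γ : List (Sen R P (Option N))) :
    sat M g w (conjList [conjList (Γ.map Sen.ex), allSen (disjList Γ)]) ↔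
      ((∀ γ ∈ Γ, ∃ u, sat M (extOpt g u) w γ) ∧
       (∀ u, ∃ γ ∈ Γ, sat M (extOpt g u) w γ)) := by
  rw [sat_conjList]
  constructor
  · intro h
    have h1 := h _ (List.mem_cons_self)
    have h2 := h _ (List.mem_cons_of_mem _ (List.mem_cons_self))
    rw [sat_conjList] at h1
    rw [sat_all] at h2
    constructor
    · intro γ hγ
      exact (sat_ex' M g w γ).mp (h1 _ (List.mem_map_of_mem hγ))
    · intro u
      exact (sat_disjList M _ w Γ).mp (h2 u)
  · rintro ⟨h1, h2⟩ ψ hψ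
    rcases List.mem_pair.mp hψ with rfl | rfl
    · rw [sat_conjList]
      intro ψ hψ
      obtain ⟨γ, hγ, rfl⟩ := List.mem_map.mp hψ
      exact (sat_ex' M g w γ).mpr (h1 γ hγ)
    · rw [sat_all]
      intro u
      exact (sat_disjList M _ w Γ).mpr (h2 u)

/-! ### Nodup of the game-sentence lists -/

mutual
theorem nodupT {R P : Type} {O : Ops} (eP : List P) :
    ∀ (N : Type) (eN : List N) (t : GTree R P O N), (thetaT eP eN t).Nodup
  | _, eN, .leaf => leafTheta_nodup eP eN
  | N, eN, .node F => by
      rw [thetaT]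
      exact List.Nodup.map (fun l1 l2 h => conjList_inj h) (nodupF eP N eN F)

theorem nodupF {R P : Type} {O : Ops} (eP : List P) :
    ∀ (N : Type) (eN : List N) (F : GForest R P O N), (thetaF eP eN F).Nodup
  | _, _, .nil => by rw [thetaF]; simp
  | N, eN, .cons e F => by
      rw [thetaF, List.nodup_flatMap]
      constructor
      · intro φ _
        exact List.Nodup.map (List.cons_injective) (nodupF eP N eN F)
      · refine (nodupE eP N eN e).imp ?_
        intro φ φ' hne x hx hx'
        obtain ⟨l, -, rfl⟩ := List.mem_map.mp hx
        obtain ⟨l', -, he⟩ := List.mem_map.mp hx'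
        injection he with h1 _
        exact hne h1.symm

theorem nodupE {R P : Type} {O : Ops} (eP : List P) :
    ∀ (N : Type) (eN : List N) (e : GEdge R P O N), (thetaE eP eN e).Nodup
  | N, eN, .pos _ a t => by
      rw [thetaE]
      refine List.Nodup.map ?_ (List.nodup_sublists.mpr (nodupT eP N eN t))
      intro Γ Γ' h
      have h2 := conjList_inj h
      injection h2 with hA h2
      exact List.map_injective_iff.mpr (pos_inj a) (conjList_inj hA)
  | N, eN, .at_ _ k t => by
      rw [thetaE]
      exact List.Nodup.map (at_inj k) (nodupT eP N eN t)
  | N, eN, .store _ t => by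
      rw [thetaE]
      exact List.Nodup.map store_inj (nodupT eP (Option N) (none :: eN.map some) t)
  | N, eN, .ex _ t => by
      rw [thetaE]
      refine List.Nodup.map ?_
        (List.nodup_sublists.mpr (nodupT eP (Option N) (none :: eN.map some) t))
      intro Γ Γ' h
      have h2 := conjList_inj h
      injection h2 with hA h2
      exact List.map_injective_iff.mpr ex_inj (conjList_inj hA)
  | N, eN, .idle t => by
      rw [thetaE]
      exact nodupT eP N eN t
end

/-! ### Existence and uniqueness -/

mutual
theorem uniqT {R P W : Type} {O : Ops} (eP : List P) (M : Kripke R P W) :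
    ∀ (N : Type) (eN : List N) (t : GTree R P O N) (g : N → W) (w : W),
      ∃! φ : Sen R P N, φ ∈ thetaT eP eN t ∧ sat M g w φ
  | N, eN, .leaf, g, w => by
      rw [thetaT]
      exact leaf_exists_unique M eP eN g w
  | N, eN, .node F, g, w => by
      obtain ⟨l, ⟨hl, hsat⟩, hu⟩ := uniqF eP M N eN F g w
      refine ⟨conjList l, ⟨?_, ?_⟩, ?_⟩
      · rw [thetaT]
        exact List.mem_map_of_mem hl
      · rw [sat_conjList]
        exact hsat
      · rintro φ' ⟨hm, hs⟩
        rw [thetaT] at hm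
        obtain ⟨l', hl', rfl⟩ := List.mem_map.mp hm
        rw [sat_conjList] at hs
        rw [hu l' ⟨hl', hs⟩]

theorem uniqF {R P W : Type} {O : Ops} (eP : List P) (M : Kripke R P W) :
    ∀ (N : Type) (eN : List N) (F : GForest R P O N) (g : N → W) (w : W),
      ∃! l : List (Sen R P N), l ∈ thetaF eP eN F ∧ ∀ φ ∈ l, sat M g w φ
  | N, eN, .nil, g, w => by
      refine ⟨[], ⟨by rw [thetaF]; simp, by simp⟩, ?_⟩
      rintro l ⟨hm, -⟩
      rw [thetaF] at hm
      simpa using hm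
  | N, eN, .cons e F, g, w => by
      obtain ⟨φ₀, ⟨hφm, hφs⟩, hφu⟩ := uniqE eP M N eN e g w
      obtain ⟨l₀, ⟨hlm, hls⟩, hlu⟩ := uniqF eP M N eN F g w
      refine ⟨φ₀ :: l₀, ⟨?_, ?_⟩, ?_⟩
      · rw [thetaF]
        exact List.mem_flatMap.mpr ⟨φ₀, hφm, List.mem_map_of_mem hlm⟩
      · intro ψ hψ
        rcases List.mem_cons.mp hψ with rfl | h
        · exact hφs
        · exact hls _ h
      · rintro l ⟨hm, hs⟩
        rw [thetaF] at hm
        obtain ⟨φ, hφ, hmem2⟩ := List.mem_flatMap.mp hm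
        obtain ⟨l', hl', rfl⟩ := List.mem_map.mp hmem2
        have e1 : φ = φ₀ := hφu φ ⟨hφ, hs _ (List.mem_cons_self)⟩
        have e2 : l' = l₀ := hlu l' ⟨hl', fun ψ h => hs _ (List.mem_cons_of_mem _ h)⟩
        rw [e1, e2]

theorem uniqE {R P W : Type} {O : Ops} (eP : List P) (M : Kripke R P W) :
    ∀ (N : Type) (eN : List N) (e : GEdge R P O N) (g : N → W) (w : W),
      ∃! φ : Sen R P N, φ ∈ thetaE eP eN e ∧ sat M g w φ
  | N, eN, .pos h a t, g, w => by
      have hq : ∀ i : {v : W // actRel M a w v},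
          ∃! γ, γ ∈ thetaT eP eN t ∧ (fun (i : {v : W // actRel M a w v}) (γ : Sen R P N) =>
            sat M g i.1 γ) i γ :=
        fun i => uniqT eP M N eN t g i.1
      obtain ⟨Γ, hsub, hB, hC, hD⟩ := filter_canon (thetaT eP eN t) (nodupT eP N eN t) _ hq
      refine ⟨conjList [conjList (Γ.map (Sen.pos a)), necSen a (disjList Γ)], ⟨?_, ?_⟩, ?_⟩
      · rw [thetaE]
        exact List.mem_map_of_mem (List.mem_sublists.mpr hsub)
      · rw [sat_posGame]
        constructor
        · intro γ hγ
          obtain ⟨⟨v, hv⟩, hs⟩ := hB γ hγ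
          exact ⟨v, hv, hs⟩
        · intro v hv
          obtain ⟨γ, hγ, hs⟩ := hC ⟨v, hv⟩
          exact ⟨γ, hγ, hs⟩
      · rintro φ' ⟨hm, hs⟩
        rw [thetaE] at hm
        obtain ⟨Γ', hΓ', rfl⟩ := List.mem_map.mp hm
        rw [sat_posGame] at hs
        rw [hD Γ' (List.mem_sublists.mp hΓ')
          (fun γ hγ => by obtain ⟨v, hv, h3⟩ := hs.1 γ hγ; exact ⟨⟨v, hv⟩, h3⟩)
          (fun i => hs.2 i.1 i.2)]
  | N, eN, .at_ h k t, g, w => by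
      obtain ⟨γ₀, ⟨hm, hsat⟩, hu⟩ := uniqT eP M N eN t g (g k)
      refine ⟨Sen.at_ k γ₀, ⟨?_, ?_⟩, ?_⟩
      · rw [thetaE]
        exact List.mem_map_of_mem hm
      · exact hsat
      · rintro φ' ⟨hm', hs'⟩
        rw [thetaE] at hm'
        obtain ⟨γ, hγ, rfl⟩ := List.mem_map.mp hm'
        rw [hu γ ⟨hγ, hs'⟩]
  | N, eN, .store h t, g, w => by
      obtain ⟨γ₀, ⟨hm, hsat⟩, hu⟩ :=
        uniqT eP M (Option N) (none :: eN.map some) t (extOpt g w) w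
      refine ⟨Sen.store γ₀, ⟨?_, ?_⟩, ?_⟩
      · rw [thetaE]
        exact List.mem_map_of_mem hm
      · exact hsat
      · rintro φ' ⟨hm', hs'⟩
        rw [thetaE] at hm'
        obtain ⟨γ, hγ, rfl⟩ := List.mem_map.mp hm'
        rw [hu γ ⟨hγ, hs'⟩]
  | N, eN, .ex h t, g, w => by
      have hq : ∀ u : W,
          ∃! γ, γ ∈ thetaT eP (none :: eN.map some) t ∧ (fun (u : W) (γ : Sen R P (Option N)) =>
            sat M (extOpt g u) w γ) u γ :=
        fun u => uniqT eP M (Option N) (none :: eN.map some) t (extOpt g u) w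
      obtain ⟨Γ, hsub, hB, hC, hD⟩ := filter_canon (thetaT eP (none :: eN.map some) t)
        (nodupT eP (Option N) (none :: eN.map some) t) _ hq
      refine ⟨conjList [conjList (Γ.map Sen.ex), allSen (disjList Γ)], ⟨?_, ?_⟩, ?_⟩
      · rw [thetaE]
        exact List.mem_map_of_mem (List.mem_sublists.mpr hsub)
      · rw [sat_exGame]
        exact ⟨hB, hC⟩
      · rintro φ' ⟨hm, hs⟩
        rw [thetaE] at hm
        obtain ⟨Γ', hΓ', rfl⟩ := List.mem_map.mp hm
        rw [sat_exGame] at hs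
        rw [hD Γ' (List.mem_sublists.mp hΓ') hs.1 hs.2]
  | N, eN, .idle t, g, w => by
      rw [show thetaE eP eN (GEdge.idle (O := O) t) = thetaT eP eN t from by rw [thetaE]]
      exact uniqT eP M N eN t g w
end

/-- Fraïssé-Hintikka, existence and uniqueness: over a finite
signature (given by complete enumerations of its nominals, relation symbols and
propositional symbols), every pointed model satisfies exactly one game sentence
from `Θ_tr`, for every gameboard tree `tr` rooted at that signature. -/
theorem game_sentence_exists_unique {R P N W : Type} {O : Ops}
    (eP : List P) (heP : ∀ p : P, p ∈ eP)
    (eN : List N) (heN : ∀ k : N, k ∈ eN)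
    (eR : List R) (heR : ∀ r : R, r ∈ eR)
    (M : Kripke R P W) (g : N → W) (w : W)
    (tr : GTree R P O N) :
    ∃! φ : Sen R P N, φ ∈ thetaT eP eN tr ∧ sat M g w φ := by
  exact uniqT eP M N eN tr g w
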